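/- arXiv:1601.03795 — 2 statements merged into one kernel-verified Lean document; each statement's English description precedes it below -/
import Mathlib

section
/- Suppose g(m) ≤ C₁ p_m^α and |a_m^{(j)}| ≤ p_m^β for all m and 1≤j≤g(m), where C₁>0, α,β≥0, and p_m is the m-th prime. Let c̃_k be the Dirichlet coefficients of the polynomial Euler product φ̃(s)=Σ_{k=1}^∞ c̃_k k^{−s} for Re(s)>α+β+1; they are determined multiplicatively by c̃_{p_m^l} = Σ* (a_m^{(1)})^{h_1}···(a_m^{(g(m))})^{h_{g(m)}}, the sum over tuples of non-negative integers with h_1 f(1,m)+…+h_{g(m)} f(g(m),m)=l, and c̃_k = Π_i c̃_{p_i^{l_i}} for k = p_1^{l_1}···p_r^{l_r}. Then |c̃_k| ≤ C₁^{Ω(k)} k^{α+β} for every k∈ℕ, where Ω(k) denotes the total number of prime divisors of k counted with multiplicity. -/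
private lemma multichoose_le_pow : ∀ n k : ℕ, Nat.multichoose n k ≤ n ^ k
  | n, 0 => by simp [Nat.multichoose_zero_right]
  | 0, k + 1 => by simp [Nat.multichoose_zero_succ]
  | n + 1, k + 1 => by
    rw [Nat.multichoose_succ_succ]
    have h1 := multichoose_le_pow n (k + 1)
    have h2 := multichoose_le_pow (n + 1) k
    have h3 : n ^ (k + 1) ≤ (n + 1) ^ k * n := by
      rw [pow_succ]
      exact Nat.mul_le_mul_right n (Nat.pow_le_pow_left (Nat.le_succ n) k)
    have h4 : (n + 1) ^ (k + 1) = (n + 1) ^ k * n + (n + 1) ^ k := by ring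
    omega

private lemma multiset_card_finset_sum {ι κ : Type*} (s : Finset ι) (F : ι → Multiset κ) :
    Multiset.card (∑ i ∈ s, F i) = ∑ i ∈ s, Multiset.card (F i) := by
  classical
  induction s using Finset.cons_induction with
  | empty => simp
  | cons a s ha ih => simp [Finset.sum_cons, ih]

private lemma card_filter_le (G l : ℕ) (w : Fin G → ℕ) (hw : ∀ j, 1 ≤ w j) :
    ((Fintype.piFinset fun _ : Fin G => Finset.range (l + 1)).filter
      (fun h => ∑ j, h j * w j = l)).card ≤ G ^ l := by
  classical
  set s := (Fintype.piFinset fun _ : Fin G => Finset.range (l + 1)).filter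
      (fun h => ∑ j, h j * w j = l) with hs
  have hcount : ∀ h : Fin G → ℕ, ∀ j : Fin G,
      Multiset.count j (∑ i : Fin G, Multiset.replicate (h i * w i) i) = h j * w j := by
    intro h j
    rw [Multiset.count_sum']
    simp [Multiset.count_replicate]
  have hinj : Function.Injective (fun h : s => (⟨∑ i : Fin G, Multiset.replicate (h.1 i * w i) i,
      by
        have := (Finset.mem_filter.mp h.2).2
        rw [multiset_card_finset_sum]
        simpa using this⟩ : Sym (Fin G) l)) := by
    rintro ⟨h1, hh1⟩ ⟨h2, hh2⟩ heq
    have hm : (∑ i : Fin G, Multiset.replicate (h1 i * w i) i) =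
        ∑ i : Fin G, Multiset.replicate (h2 i * w i) i := congrArg Sym.toMultiset heq
    ext1
    funext j
    have := congrArg (Multiset.count j) hm
    rw [hcount h1 j, hcount h2 j] at this
    exact Nat.eq_of_mul_eq_mul_right (hw j) this
  calc s.card = Fintype.card s := (Fintype.card_coe s).symm
    _ ≤ Fintype.card (Sym (Fin G) l) := Fintype.card_le_of_injective _ hinj
    _ = Nat.multichoose G l := by
        rw [Sym.card_sym_eq_multichoose, Fintype.card_fin]
    _ ≤ G ^ l := multichoose_le_pow G l

/-- Bound for the Dirichlet coefficients `c̃_k` of the polynomial Euler product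
`φ̃(s) = ∏_m ∏_{j<g(m)} (1 − a_m^{(j)} p_m^{−s f(j,m)})⁻¹` (with `p_m = Nat.nth Nat.Prime m`
the `m`-th prime): if the coefficients are determined multiplicatively by
`c̃_{p_m^l} = Σ* (a_m^{(1)})^{h_1} ⋯ (a_m^{(g(m))})^{h_{g(m)}}` (sum over tuples of
non-negative integers with `h_1 f(1,m) + … + h_{g(m)} f(g(m),m) = l`; since each
`f(j,m) ≥ 1` these are exactly the tuples in the filtered `Finset` below) and
`c̃_k = ∏ c̃_{p_i^{l_i}}` for `k = p_1^{l_1} ⋯ p_r^{l_r}`, then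
`|c̃_k| ≤ C₁^{Ω(k)} k^{α+β}`, where `Ω(k)` is the number of prime divisors of `k`
counted with multiplicity. -/
theorem euler_dirichlet_coeff_bound
    (g : ℕ → ℕ) (f : (m : ℕ) → Fin (g m) → ℕ) (hf : ∀ m j, 1 ≤ f m j)
    (a : (m : ℕ) → Fin (g m) → ℂ)
    (C₁ α β : ℝ) (hC₁ : 0 < C₁) (hα : 0 ≤ α) (hβ : 0 ≤ β)
    (hg : ∀ m : ℕ, (g m : ℝ) ≤ C₁ * (Nat.nth Nat.Prime m : ℝ) ^ α)
    (ha : ∀ m j, ‖a m j‖ ≤ (Nat.nth Nat.Prime m : ℝ) ^ β)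
    (c : ℕ → ℂ)
    (hcpp : ∀ m l : ℕ, c (Nat.nth Nat.Prime m ^ l) =
      ∑ h ∈ (Fintype.piFinset fun _ : Fin (g m) => Finset.range (l + 1)).filter
        (fun h => ∑ j, h j * f m j = l), ∏ j, a m j ^ h j)
    (hcmul : ∀ k : ℕ, 1 ≤ k → c k = k.factorization.prod fun p e => c (p ^ e)) :
    ∀ k : ℕ, 1 ≤ k →
      ‖c k‖ ≤ C₁ ^ k.primeFactorsList.length * (k : ℝ) ^ (α + β) := by
  classical
  -- prime power bound
  have key : ∀ m l : ℕ, ‖c (Nat.nth Nat.Prime m ^ l)‖ ≤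
      C₁ ^ l * ((Nat.nth Nat.Prime m ^ l : ℕ) : ℝ) ^ (α + β) := by
    intro m l
    set p := Nat.nth Nat.Prime m with hp
    have hpp : p.Prime := Nat.prime_nth_prime m
    have hp1 : (1 : ℝ) ≤ (p : ℝ) := by exact_mod_cast hpp.one_lt.le
    have hp0 : (0 : ℝ) ≤ (p : ℝ) := by positivity
    have hpb1 : (1 : ℝ) ≤ (p : ℝ) ^ β := Real.one_le_rpow hp1 hβ
    have hpb0 : (0 : ℝ) ≤ (p : ℝ) ^ β := le_trans zero_le_one hpb1
    rw [hcpp m l]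
    refine le_trans (norm_sum_le _ _) ?_
    have hterm : ∀ h ∈ (Fintype.piFinset fun _ : Fin (g m) => Finset.range (l + 1)).filter
        (fun h => ∑ j, h j * f m j = l),
        ‖∏ j, a m j ^ h j‖ ≤ ((p : ℝ) ^ β) ^ l := by
      intro h hh
      have hsum : ∑ j, h j * f m j = l := (Finset.mem_filter.mp hh).2
      have hle : ∑ j, h j ≤ l := by
        rw [← hsum]
        exact Finset.sum_le_sum fun j _ => Nat.le_mul_of_pos_right _ (hf m j)
      calc ‖∏ j, a m j ^ h j‖ = ∏ j, ‖a m j‖ ^ h j := by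
            rw [norm_prod]; exact Finset.prod_congr rfl fun j _ => norm_pow _ _
        _ ≤ ∏ j, ((p : ℝ) ^ β) ^ h j :=
            Finset.prod_le_prod (fun j _ => by positivity)
              (fun j _ => pow_le_pow_left₀ (norm_nonneg _) (ha m j) _)
        _ = ((p : ℝ) ^ β) ^ (∑ j, h j) := by rw [← Finset.prod_pow_eq_pow_sum]
        _ ≤ ((p : ℝ) ^ β) ^ l := pow_le_pow_right₀ hpb1 hle
    refine le_trans (Finset.sum_le_sum hterm) ?_
    rw [Finset.sum_const, nsmul_eq_mul]
    have hcard := card_filter_le (g m) l (f m) (hf m)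
    have hcardR : (((Fintype.piFinset fun _ : Fin (g m) => Finset.range (l + 1)).filter
        (fun h => ∑ j, h j * f m j = l)).card : ℝ) ≤ ((g m : ℝ)) ^ l := by
      exact_mod_cast hcard
    calc (((Fintype.piFinset fun _ : Fin (g m) => Finset.range (l + 1)).filter
          (fun h => ∑ j, h j * f m j = l)).card : ℝ) * ((p : ℝ) ^ β) ^ l
        ≤ ((g m : ℝ)) ^ l * ((p : ℝ) ^ β) ^ l := by
          exact mul_le_mul_of_nonneg_right hcardR (by positivity)
      _ ≤ (C₁ * (p : ℝ) ^ α) ^ l * ((p : ℝ) ^ β) ^ l := by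
          refine mul_le_mul_of_nonneg_right ?_ (by positivity)
          exact pow_le_pow_left₀ (by positivity) (hg m) l
      _ = C₁ ^ l * (((p : ℝ) ^ α) ^ l * ((p : ℝ) ^ β) ^ l) := by ring
      _ = C₁ ^ l * ((p ^ l : ℕ) : ℝ) ^ (α + β) := by
          congr 1
          rw [← mul_pow, ← Real.rpow_add (lt_of_lt_of_le zero_lt_one hp1)]
          push_cast
          rw [← Real.rpow_natCast ((p : ℝ) ^ (α + β)) l, ← Real.rpow_mul hp0,
            ← Real.rpow_natCast (p : ℝ) l, ← Real.rpow_mul hp0, mul_comm]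
  -- main argument
  intro k hk
  have hk0 : k ≠ 0 := by omega
  rw [hcmul k hk, Finsupp.prod]
  rw [norm_prod]
  have hstep : ∀ q ∈ k.factorization.support,
      ‖c (q ^ k.factorization q)‖ ≤
        C₁ ^ (k.factorization q) * ((q ^ k.factorization q : ℕ) : ℝ) ^ (α + β) := by
    intro q hq
    have hqp : q.Prime := Nat.prime_of_mem_primeFactors (by rwa [Nat.support_factorization] at hq)
    have := key (Nat.count Nat.Prime q) (k.factorization q)
    rwa [Nat.nth_count hqp] at this
  refine le_trans (Finset.prod_le_prod (fun q _ => norm_nonneg _) hstep) ?_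
  rw [Finset.prod_mul_distrib, Finset.prod_pow_eq_pow_sum]
  have hΩ : ∑ q ∈ k.factorization.support, k.factorization q = k.primeFactorsList.length := by
    have h1 := Multiset.toFinsupp_sum_eq (k.primeFactorsList : Multiset ℕ)
    rw [← Nat.factorization_eq_primeFactorsList_multiset k] at h1
    simpa [Finsupp.sum] using h1
  rw [hΩ]
  refine mul_le_mul_of_nonneg_left (le_of_eq ?_) (by positivity)
  rw [Real.finset_prod_rpow _ _ (fun q _ => by positivity)]
  congr 1
  have h2 := Nat.factorization_prod_pow_eq_self hk0
  rw [Finsupp.prod] at h2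
  exact_mod_cast h2
end

section
/- Suppose g(m) ≤ C₁ p_m^α and |a_m^{(j)}| ≤ p_m^β for all m and 1≤j≤g(m), where C₁>0, α,β≥0, and p_m is the m-th prime, and let c̃_k be the multiplicatively determined Dirichlet coefficients of the polynomial Euler product φ̃. Then for every ε>0 there exists M>0 such that for all k∈ℕ whose prime factors all exceed M, one has |c̃_k| ≤ k^{α+β+ε}. -/
lemma geom_binom (r : ℝ) (hr : 0 ≤ r) (l : ℕ) : ∑ h ∈ Finset.range (l+1), r ^ h ≤ (1 + r) ^ l := by
  have := add_pow r 1 l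
  simp only [one_pow, mul_one] at this
  rw [add_comm 1 r, this]
  apply Finset.sum_le_sum
  intro i hi
  have hc : 1 ≤ (l.choose i : ℝ) := by
    exact_mod_cast Nat.succ_le_of_lt (Nat.choose_pos (Nat.lt_succ_iff.mp (Finset.mem_range.mp hi)))
  nlinarith [pow_nonneg hr i]

lemma exp_half_le_two : Real.exp (1/2) ≤ 2 := by
  nlinarith [Real.exp_one_lt_d9, Real.exp_pos (1/2 : ℝ),
    (Real.exp_add (1/2) (1/2)).symm]

lemma pp_bound (G : ℕ) (f : Fin G → ℕ) (hf : ∀ j, 1 ≤ f j)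
    (a : Fin G → ℂ) (A : ℝ) (hA : 1 ≤ A) (ha : ∀ j, ‖a j‖ ≤ A) (l : ℕ) :
    ‖∑ h ∈ (Fintype.piFinset fun _ : Fin G => Finset.range (l + 1)).filter
        (fun h => ∑ j, h j * f j = l), ∏ j, a j ^ h j‖
      ≤ (4 * ((G : ℝ) + 1) * A) ^ l := by
  set Gr : ℝ := (G : ℝ) + 1 with hGr
  have hG1 : 1 ≤ Gr := by rw [hGr]; linarith [Nat.cast_nonneg (α := ℝ) G]
  have hA0 : 0 < A := by linarith
  set x : ℝ := (2 * Gr * A)⁻¹ with hxdef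
  have hden : (1:ℝ) ≤ 2 * Gr * A := by nlinarith
  have hx0 : 0 < x := by positivity
  have hx1 : x ≤ 1 := by
    rw [hxdef]
    exact inv_le_one_of_one_le₀ hden
  set r : Fin G → ℝ := fun j => ‖a j‖ * x ^ (f j) with hrdef
  have hr0 : ∀ j, 0 ≤ r j := fun j => by positivity
  have hrle : ∀ j, r j ≤ (2 * Gr)⁻¹ := by
    intro j
    have h1 : x ^ (f j) ≤ x ^ 1 := pow_le_pow_of_le_one hx0.le hx1 (hf j)
    have h2 : r j ≤ A * x := by
      rw [hrdef]
      calc ‖a j‖ * x ^ f j ≤ A * x ^ 1 :=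
        mul_le_mul (ha j) h1 (by positivity) hA0.le
      _ = A * x := by ring
    have h3 : A * x = (2 * Gr)⁻¹ := by
      rw [hxdef]
      field_simp
    linarith
  -- Step 1: norm bound
  have step1 : ‖∑ h ∈ (Fintype.piFinset fun _ : Fin G => Finset.range (l + 1)).filter
        (fun h => ∑ j, h j * f j = l), ∏ j, a j ^ h j‖
      ≤ ∑ h ∈ (Fintype.piFinset fun _ : Fin G => Finset.range (l + 1)).filter
        (fun h => ∑ j, h j * f j = l), ∏ j, ‖a j‖ ^ h j := by
    refine (norm_sum_le _ _).trans (Finset.sum_le_sum fun h _ => ?_)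
    rw [norm_prod]
    exact le_of_eq (Finset.prod_congr rfl fun j _ => norm_pow _ _)
  -- Step 2: multiply by x^l
  have step2 : (∑ h ∈ (Fintype.piFinset fun _ : Fin G => Finset.range (l + 1)).filter
        (fun h => ∑ j, h j * f j = l), ∏ j, ‖a j‖ ^ h j) * x ^ l
      = ∑ h ∈ (Fintype.piFinset fun _ : Fin G => Finset.range (l + 1)).filter
        (fun h => ∑ j, h j * f j = l), ∏ j, r j ^ h j := by
    rw [Finset.sum_mul]
    refine Finset.sum_congr rfl fun h hh => ?_
    have hsum : ∑ j, h j * f j = l := (Finset.mem_filter.mp hh).2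
    calc (∏ j, ‖a j‖ ^ h j) * x ^ l
        = (∏ j, ‖a j‖ ^ h j) * x ^ (∑ j, h j * f j) := by rw [hsum]
      _ = (∏ j, ‖a j‖ ^ h j) * ∏ j, x ^ (h j * f j) := by
          rw [Finset.prod_pow_eq_pow_sum]
      _ = ∏ j, (‖a j‖ ^ h j * x ^ (h j * f j)) := by rw [Finset.prod_mul_distrib]
      _ = ∏ j, r j ^ h j := by
          refine Finset.prod_congr rfl fun j _ => ?_
          rw [hrdef]
          rw [mul_pow, ← pow_mul, mul_comm (f j) (h j)]
  -- Step 3: extend to full piFinset and factor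
  have step3 : ∑ h ∈ (Fintype.piFinset fun _ : Fin G => Finset.range (l + 1)).filter
        (fun h => ∑ j, h j * f j = l), ∏ j, r j ^ h j
      ≤ ∏ j, ∑ t ∈ Finset.range (l + 1), r j ^ t := by
    rw [Finset.prod_univ_sum]
    refine Finset.sum_le_sum_of_subset_of_nonneg (Finset.filter_subset _ _) ?_
    intro h _ _
    exact Finset.prod_nonneg fun j _ => pow_nonneg (hr0 j) _
  -- Step 4: bound the product by 2^l
  have step4 : ∏ j, ∑ t ∈ Finset.range (l + 1), r j ^ t ≤ 2 ^ l := by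
    have h1 : ∀ j : Fin G, ∑ t ∈ Finset.range (l + 1), r j ^ t ≤ (1 + (2*Gr)⁻¹) ^ l := by
      intro j
      refine (geom_binom _ (hr0 j) l).trans ?_
      apply pow_le_pow_left₀ (by positivity)
      linarith [hrle j]
    calc ∏ j, ∑ t ∈ Finset.range (l + 1), r j ^ t
        ≤ ∏ _j : Fin G, (1 + (2*Gr)⁻¹) ^ l := by
          apply Finset.prod_le_prod (fun j _ => ?_) (fun j _ => h1 j)
          exact Finset.sum_nonneg fun t _ => pow_nonneg (hr0 j) _
      _ = ((1 + (2*Gr)⁻¹) ^ l) ^ G := by rw [Finset.prod_const, Finset.card_univ, Fintype.card_fin]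
      _ ≤ (Real.exp ((2*Gr)⁻¹) ^ l) ^ G := by
          apply pow_le_pow_left₀ (by positivity)
          apply pow_le_pow_left₀ (by positivity)
          have := Real.add_one_le_exp ((2*Gr)⁻¹)
          linarith
      _ = Real.exp ((G : ℝ) * ((2*Gr)⁻¹)) ^ l := by
          rw [← pow_mul, ← Real.exp_nat_mul, ← Real.exp_nat_mul]
          congr 1
          push_cast
          ring
      _ ≤ Real.exp (1/2) ^ l := by
          apply pow_le_pow_left₀ (Real.exp_pos _).le
          apply Real.exp_le_exp.mpr
          rw [hGr, ← div_eq_mul_inv, div_le_iff₀ (by positivity)]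
          nlinarith [Nat.cast_nonneg (α := ℝ) G]
      _ ≤ 2 ^ l := pow_le_pow_left₀ (Real.exp_pos _).le exp_half_le_two l
  -- Combine
  have hxl : 0 < x ^ l := pow_pos hx0 l
  have key : ‖∑ h ∈ (Fintype.piFinset fun _ : Fin G => Finset.range (l + 1)).filter
        (fun h => ∑ j, h j * f j = l), ∏ j, a j ^ h j‖ * x ^ l ≤ 2 ^ l := by
    calc _ ≤ (∑ h ∈ (Fintype.piFinset fun _ : Fin G => Finset.range (l + 1)).filter
        (fun h => ∑ j, h j * f j = l), ∏ j, ‖a j‖ ^ h j) * x ^ l :=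
          mul_le_mul_of_nonneg_right step1 hxl.le
      _ = _ := step2
      _ ≤ _ := step3
      _ ≤ _ := step4
  have hfinal : (2 : ℝ) ^ l / x ^ l = (4 * Gr * A) ^ l := by
    rw [div_eq_mul_inv, ← inv_pow, ← mul_pow, hxdef, inv_inv]
    ring_nf
  exact ((le_div_iff₀ hxl).mpr key).trans_eq hfinal


/-- If all prime factors of `k` are sufficiently large, then the multiplicatively
determined Dirichlet coefficients `c̃_k` of the polynomial Euler product satisfy
`|c̃_k| ≤ k^{α+β+ε}`. -/
theorem euler_dirichlet_coeff_bound_large_primes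
    (g : ℕ → ℕ) (f : (m : ℕ) → Fin (g m) → ℕ) (hf : ∀ m j, 1 ≤ f m j)
    (a : (m : ℕ) → Fin (g m) → ℂ)
    (C₁ α β : ℝ) (hC₁ : 0 < C₁) (hα : 0 ≤ α) (hβ : 0 ≤ β)
    (hg : ∀ m : ℕ, (g m : ℝ) ≤ C₁ * (Nat.nth Nat.Prime m : ℝ) ^ α)
    (ha : ∀ m j, ‖a m j‖ ≤ (Nat.nth Nat.Prime m : ℝ) ^ β)
    (c : ℕ → ℂ)
    (hcpp : ∀ m l : ℕ, c (Nat.nth Nat.Prime m ^ l) =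
      ∑ h ∈ (Fintype.piFinset fun _ : Fin (g m) => Finset.range (l + 1)).filter
        (fun h => ∑ j, h j * f m j = l), ∏ j, a m j ^ h j)
    (hcmul : ∀ k : ℕ, 1 ≤ k → c k = k.factorization.prod fun p e => c (p ^ e)) :
    ∀ ε : ℝ, 0 < ε → ∃ M : ℝ, 0 < M ∧ ∀ k : ℕ, 1 ≤ k →
      (∀ p : ℕ, p.Prime → p ∣ k → M < p) →
      ‖c k‖ ≤ (k : ℝ) ^ (α + β + ε) := by
  intro ε hε
  set T : ℝ := α + β + ε with hT
  set M : ℝ := max 2 ((4 * (C₁ + 1)) ^ (1/ε : ℝ)) with hM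
  refine ⟨M, lt_of_lt_of_le two_pos (le_max_left _ _), ?_⟩
  intro k hk hkp
  have hk0 : k ≠ 0 := by omega
  -- per prime-power bound
  have key : ∀ p e : ℕ, p.Prime → M < (p : ℝ) →
      ‖c (p ^ e)‖ ≤ ((p : ℝ) ^ T) ^ e := by
    intro p e hp hpM
    set m := Nat.count Nat.Prime p with hm
    have hnth : Nat.nth Nat.Prime m = p := Nat.nth_count hp
    have hP2 : (2:ℝ) ≤ (p:ℝ) := by exact_mod_cast hp.two_le
    have hP0 : (0:ℝ) < (p:ℝ) := by linarith
    have hPβ1 : 1 ≤ (p:ℝ) ^ β := by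
      calc (1:ℝ) = (p:ℝ) ^ (0:ℝ) := (Real.rpow_zero _).symm
        _ ≤ (p:ℝ) ^ β := Real.rpow_le_rpow_of_exponent_le (by linarith) hβ
    have hPα1 : 1 ≤ (p:ℝ) ^ α := by
      calc (1:ℝ) = (p:ℝ) ^ (0:ℝ) := (Real.rpow_zero _).symm
        _ ≤ (p:ℝ) ^ α := Real.rpow_le_rpow_of_exponent_le (by linarith) hα
    have ha' : ∀ j, ‖a m j‖ ≤ (p:ℝ) ^ β := by
      intro j; have := ha m j; rwa [hnth] at this
    have hb := pp_bound (g m) (f m) (hf m) (a m) ((p:ℝ) ^ β) hPβ1 ha' e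
    have hc' := hcpp m e
    rw [hnth] at hc'
    rw [hc']
    refine hb.trans ?_
    have hg' : (g m : ℝ) ≤ C₁ * (p:ℝ) ^ α := by
      have := hg m; rwa [hnth] at this
    have hε' : 4 * (C₁ + 1) ≤ (p:ℝ) ^ ε := by
      have h1 : ((4 * (C₁ + 1)) : ℝ) ^ (1/ε : ℝ) ≤ (p:ℝ) :=
        le_of_lt (lt_of_le_of_lt (le_max_right _ _) hpM)
      have h2 : (((4 * (C₁ + 1)) : ℝ) ^ (1/ε : ℝ)) ^ ε ≤ (p:ℝ) ^ ε :=
        Real.rpow_le_rpow (by positivity) h1 hε.le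
      rwa [← Real.rpow_mul (by positivity), one_div_mul_cancel hε.ne', Real.rpow_one] at h2
    have hBase : 4 * ((g m : ℝ) + 1) * (p:ℝ) ^ β ≤ (p:ℝ) ^ T := by
      have h3 : 4 * ((g m : ℝ) + 1) ≤ 4 * (C₁ + 1) * (p:ℝ) ^ α := by nlinarith
      calc 4 * ((g m : ℝ) + 1) * (p:ℝ) ^ β
          ≤ (4 * (C₁ + 1) * (p:ℝ) ^ α) * (p:ℝ) ^ β :=
            mul_le_mul_of_nonneg_right h3 (by positivity)
        _ ≤ ((p:ℝ) ^ ε * (p:ℝ) ^ α) * (p:ℝ) ^ β :=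
            mul_le_mul_of_nonneg_right
              (mul_le_mul_of_nonneg_right hε' (by positivity)) (by positivity)
        _ = (p:ℝ) ^ T := by
            rw [← Real.rpow_add hP0, ← Real.rpow_add hP0, hT]
            congr 1
            ring
    exact pow_le_pow_left₀ (by positivity) hBase e
  -- assembly
  rw [hcmul k hk]
  have hkeq : ∏ p ∈ k.factorization.support, p ^ k.factorization p = k :=
    Nat.factorization_prod_pow_eq_self hk0
  have hmem : ∀ p ∈ k.factorization.support, p.Prime ∧ M < (p:ℝ) := by
    intro p hp
    rw [Nat.support_factorization] at hp
    have hpp := Nat.prime_of_mem_primeFactors hp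
    exact ⟨hpp, hkp p hpp (Nat.dvd_of_mem_primeFactors hp)⟩
  calc ‖k.factorization.prod fun p e => c (p ^ e)‖
      = ∏ p ∈ k.factorization.support, ‖c (p ^ k.factorization p)‖ := by
        rw [Finsupp.prod, norm_prod]
    _ ≤ ∏ p ∈ k.factorization.support, ((p:ℝ) ^ T) ^ k.factorization p :=
        Finset.prod_le_prod (fun p _ => norm_nonneg _)
          (fun p hp => key p (k.factorization p) (hmem p hp).1 (hmem p hp).2)
    _ = ∏ p ∈ k.factorization.support, ((p ^ k.factorization p : ℕ) : ℝ) ^ T := by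
        refine Finset.prod_congr rfl fun p hp => ?_
        have hP0 : (0:ℝ) ≤ (p:ℝ) := by positivity
        rw [← Real.rpow_natCast ((p:ℝ) ^ T) (k.factorization p),
          ← Real.rpow_mul hP0]
        push_cast
        rw [← Real.rpow_natCast (p:ℝ) (k.factorization p), ← Real.rpow_mul hP0,
          mul_comm]
    _ = (∏ p ∈ k.factorization.support, ((p ^ k.factorization p : ℕ) : ℝ)) ^ T :=
        Real.finset_prod_rpow _ _ (fun p _ => by positivity) T
    _ = (k : ℝ) ^ T := by rw [← Nat.cast_prod, hkeq]
end
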